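/- arXiv:1712.01243 — 7 statements merged into one kernel-verified Lean document; each statement's English description precedes it below -/
import Mathlib

section
/- Suppose n + 1 is an odd prime and δ ∈ {-1, 1}^{n+1} satisfies ∑_{k=0}^{n} δ_k * C(n, k) = 0. Then either δ_k = (-1)^k for all k, or δ_k = -(-1)^k for all k. In other words, only the two trivial alternating solutions of the bisection problem exist. -/
/-!
Since `n + 1 = p` is prime, Pascal's rule gives `C(n, k) ≡ (-1)^k (mod p)`, so the signs
`ε_k = δ_k (-1)^k` satisfy `p ∣ ∑ ε_k`. This sum of `p` signs has absolute value at most `p`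
and the parity of `p`, hence is nonzero; so it is `±p` and all the `ε_k` agree.
-/

open Finset

theorem Nat.Prime.choose_modEq_neg_one_pow {n k : ℕ} (hp : (n + 1).Prime) (hk : k ≤ n) :
    (n.choose k : ℤ) ≡ (-1) ^ k [ZMOD (n + 1 : ℕ)] := by
  induction k with
  | zero => simp [Int.ModEq.refl]
  | succ k ih =>
    have hdvd : (((n + 1).choose (k + 1) : ℕ) : ℤ) ≡ 0 [ZMOD (n + 1 : ℕ)] :=
      Int.modEq_zero_iff_dvd.2 <| Int.natCast_dvd_natCast.2 <|
        hp.dvd_choose_self k.succ_ne_zero (Nat.lt_succ_of_le hk)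
    have hpascal : (n.choose (k + 1) : ℤ) = ((n + 1).choose (k + 1) : ℕ) - n.choose k := by
      rw [Nat.choose_succ_succ]; push_cast; ring
    calc (n.choose (k + 1) : ℤ) = ((n + 1).choose (k + 1) : ℕ) - n.choose k := hpascal
      _ ≡ 0 - (-1) ^ k [ZMOD (n + 1 : ℕ)] := hdvd.sub (ih (Nat.le_of_succ_le hk))
      _ = (-1) ^ (k + 1) := by ring

theorem Finset.forall_eq_one_or_forall_eq_neg_one_of_card_dvd_sum {ι : Type*} {s : Finset ι}
    {ε : ι → ℤ} (hε : ∀ i ∈ s, ε i = 1 ∨ ε i = -1) (hodd : Odd #s)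
    (hdvd : (#s : ℤ) ∣ ∑ i ∈ s, ε i) : (∀ i ∈ s, ε i = 1) ∨ ∀ i ∈ s, ε i = -1 := by
  have hparity : ∑ i ∈ s, ε i ≡ #s [ZMOD 2] := by
    calc ∑ i ∈ s, ε i ≡ ∑ i ∈ s, 1 [ZMOD 2] :=
          Int.ModEq.sum fun i hi => by rcases hε i hi with h | h <;> rw [h]; decide
      _ = #s := by simp
  have hne : ∑ i ∈ s, ε i ≠ 0 := by
    intro h
    rw [h] at hparity
    have : Even (#s : ℤ) := even_iff_two_dvd.2 (Int.modEq_zero_iff_dvd.1 hparity.symm)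
    exact Int.not_even_iff_odd.2 (by exact_mod_cast hodd) this
  have hle : |∑ i ∈ s, ε i| ≤ #s :=
    calc |∑ i ∈ s, ε i| ≤ ∑ i ∈ s, |ε i| := abs_sum_le_sum_abs _ _
      _ = #s := by
        rw [Finset.card_eq_sum_ones, Nat.cast_sum, Nat.cast_one]
        exact Finset.sum_congr rfl fun i hi => by rcases hε i hi with h | h <;> simp [h]
  have hge : (#s : ℤ) ≤ |∑ i ∈ s, ε i| := Int.le_of_dvd (abs_pos.2 hne) ((dvd_abs _ _).2 hdvd)
  rcases (abs_eq (Nat.cast_nonneg _)).1 (le_antisymm hle hge) with h | h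
  · refine .inl <| (Finset.sum_eq_sum_iff_of_le fun i hi => ?_).1 (by simpa using h)
    rcases hε i hi with h | h <;> simp [h]
  · refine .inr fun i hi => ((Finset.sum_eq_sum_iff_of_le (f := fun _ => -1) fun i hi => ?_).1
      (by simpa using h.symm) i hi).symm
    rcases hε i hi with h | h <;> simp [h]

theorem only_trivial_bisections_of_succ_prime (n : ℕ) (hp : (n + 1).Prime)
    (hodd : Odd (n + 1)) (δ : ℕ → ℤ) (hδ : ∀ k ≤ n, δ k = 1 ∨ δ k = -1)
    (hsum : ∑ k ∈ Finset.range (n + 1), δ k * (n.choose k : ℤ) = 0) :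
    (∀ k ≤ n, δ k = (-1) ^ k) ∨ (∀ k ≤ n, δ k = -(-1) ^ k) := by
  set ε : ℕ → ℤ := fun k => δ k * (-1) ^ k
  have hδε (k : ℕ) : δ k = ε k * (-1) ^ k := by
    rw [mul_assoc, ← mul_pow, neg_one_mul, neg_neg, one_pow, mul_one]
  have hε : ∀ k ∈ range (n + 1), ε k = 1 ∨ ε k = -1 := fun k hk => by
    rcases hδ k (mem_range_succ_iff.1 hk) with h | h <;>
      rcases neg_one_pow_eq_or ℤ k with h' | h' <;> simp [ε, h, h']
  have hdvd : (#(range (n + 1)) : ℤ) ∣ ∑ k ∈ range (n + 1), ε k := by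
    rw [card_range, ← Int.modEq_zero_iff_dvd, ← hsum]
    exact Int.ModEq.sum fun k hk =>
      ((hp.choose_modEq_neg_one_pow (mem_range_succ_iff.1 hk)).symm.mul_left _)
  rcases forall_eq_one_or_forall_eq_neg_one_of_card_dvd_sum hε (by rwa [card_range]) hdvd
    with h | h
  · exact .inl fun k hk => by rw [hδε, h k (mem_range_succ_iff.2 hk), one_mul]
  · exact .inr fun k hk => by rw [hδε, h k (mem_range_succ_iff.2 hk), neg_one_mul]
end

section
/- Suppose n + 1 is an odd prime and δ ∈ {-1, 1}^{n+1} satisfies ∑_{k=0}^{n} δ_k * C(n, k) = 0. Then the integer Δ = ∑_{j=0}^{n} (-1)^j δ_j satisfies |Δ| = n + 1. -/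
/-!
Modulo the prime `p = n + 1` one has `C(n, k) ≡ (-1)^k`, so the hypothesis gives `p ∣ Δ`.
Being a sum of `n + 1` signs, `Δ` has the parity of `n + 1`, hence is odd and nonzero, and
`|Δ| ≤ n + 1 = p`. A nonzero multiple of `p` of absolute value at most `p` has absolute value `p`.
-/

open Finset

theorem Nat.Prime.cast_choose_pred_eq_neg_one_pow {n k : ℕ} (hp : (n + 1).Prime) (hk : k ≤ n) :
    (n.choose k : ZMod (n + 1)) = (-1) ^ k := by
  induction k with
  | zero => simp
  | succ k ih =>
    -- Pascal's rule, with `n + 1 ∣ (n + 1).choose (k + 1)`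
    have hzero : ((n + 1).choose (k + 1) : ZMod (n + 1)) = 0 :=
      (ZMod.natCast_eq_zero_iff _ _).mpr (hp.dvd_choose_self k.succ_ne_zero (by omega))
    rw [Nat.choose_succ_succ, Nat.cast_add, ih (by omega)] at hzero
    rw [pow_succ]
    linear_combination hzero

theorem Nat.Prime.sum_mul_choose_pred_modEq {n : ℕ} (hp : (n + 1).Prime) (δ : ℕ → ℤ) :
    ∑ k ∈ range (n + 1), δ k * (n.choose k : ℤ) ≡ ∑ k ∈ range (n + 1), (-1) ^ k * δ k
      [ZMOD (n + 1 : ℕ)] := by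
  rw [← ZMod.intCast_eq_intCast_iff]
  push_cast
  refine sum_congr rfl fun k hk => ?_
  rw [hp.cast_choose_pred_eq_neg_one_pow (Nat.lt_succ_iff.mp (mem_range.mp hk)), mul_comm]

theorem Finset.odd_sum_iff_odd_card_of_abs_eq_one {ι : Type*} {s : Finset ι} {f : ι → ℤ}
    (hf : ∀ i ∈ s, |f i| = 1) : Odd (∑ i ∈ s, f i) ↔ Odd #s := by
  have hcast : ((∑ i ∈ s, f i : ℤ) : ZMod 2) = #s := by
    rw [Int.cast_sum, card_eq_sum_ones, Nat.cast_sum, Nat.cast_one]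
    refine sum_congr rfl fun i hi => ?_
    rcases (abs_eq zero_le_one).mp (hf i hi) with h | h <;> simp [h]
  rw [← ZMod.intCast_eq_one_iff_odd, ← ZMod.natCast_eq_one_iff_odd, hcast]

theorem Finset.abs_sum_le_card_of_abs_le_one {ι : Type*} {s : Finset ι} {f : ι → ℤ}
    (hf : ∀ i ∈ s, |f i| ≤ 1) : |∑ i ∈ s, f i| ≤ #s := by
  simpa using (abs_sum_le_sum_abs f s).trans (sum_le_card_nsmul s _ 1 hf)

theorem abs_alternating_sum_eq_succ (n : ℕ) (hp : (n + 1).Prime)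
    (hodd : Odd (n + 1)) (δ : ℕ → ℤ) (hδ : ∀ k ≤ n, δ k = 1 ∨ δ k = -1)
    (hsum : ∑ k ∈ Finset.range (n + 1), δ k * (n.choose k : ℤ) = 0) :
    |∑ j ∈ Finset.range (n + 1), (-1 : ℤ) ^ j * δ j| = n + 1 := by
  set Δ := ∑ j ∈ Finset.range (n + 1), (-1 : ℤ) ^ j * δ j
  have hsign : ∀ j ∈ range (n + 1), |(-1 : ℤ) ^ j * δ j| = 1 := fun j hj => by
    rcases hδ j (Nat.lt_succ_iff.mp (mem_range.mp hj)) with h | h <;> simp [h]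
  have hdvd : ((n + 1 : ℕ) : ℤ) ∣ Δ := by
    simpa [hsum] using (hp.sum_mul_choose_pred_modEq δ).dvd
  have hne : Δ ≠ 0 := by
    rw [← card_range (n + 1), ← odd_sum_iff_odd_card_of_abs_eq_one hsign] at hodd
    exact fun h => Int.not_odd_zero (h ▸ hodd)
  have hle : |Δ| ≤ n + 1 := by
    simpa using abs_sum_le_card_of_abs_le_one fun j hj => (hsign j hj).le
  have hge : ((n + 1 : ℕ) : ℤ) ≤ |Δ| :=
    Int.le_of_dvd (abs_pos.mpr hne) ((dvd_abs _ _).mpr hdvd)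
  exact le_antisymm hle (by exact_mod_cast hge)
end

section
/- Let q be a prime such that p = 2q - 1 is also prime. Then for every j with 1 ≤ j ≤ q - 1, the integer C(p, j)/p is congruent to (-1)^{j-1} modulo q. -/
/-!
Since `p = q + (q - 1)`, Lucas's theorem gives `C(p, j) ≡ C(q - 1, j) ≡ (-1)^j (mod q)` for `j < q`;
dividing by `p ≡ -1 (mod q)` flips the sign.
-/

namespace Choose

theorem choose_modEq_choose_mod_of_lt {p n k : ℕ} [Fact p.Prime] (hk : k < p) :
    n.choose k ≡ (n % p).choose k [MOD p] := by
  simpa [Nat.mod_eq_of_lt hk, Nat.div_eq_of_lt hk] using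
    choose_modEq_choose_mod_mul_choose_div_nat (n := n) (k := k) (p := p)

end Choose

namespace ZMod

theorem sub_one_choose_eq_neg_one_pow {p : ℕ} [hp : Fact p.Prime] {k : ℕ} (hk : k < p) :
    ((p - 1).choose k : ZMod p) = (-1) ^ k := by
  induction k with
  | zero => simp
  | succ k ih =>
    have hpascal : (p - 1).choose k + (p - 1).choose (k + 1) = p.choose (k + 1) := by
      rw [← Nat.choose_succ_succ', Nat.sub_add_cancel hp.out.one_le]
    have hzero : (p.choose (k + 1) : ZMod p) = 0 :=
      (natCast_eq_zero_iff _ _).mpr (hp.out.dvd_choose_self k.succ_ne_zero hk)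
    rw [← hpascal, Nat.cast_add, ih (by omega)] at hzero
    linear_combination hzero

end ZMod

theorem choose_div_prime_congr (q p : ℕ) (hq : q.Prime) (hp : p.Prime)
    (hpq : p = 2 * q - 1) (j : ℕ) (hj1 : 1 ≤ j) (hj2 : j ≤ q - 1) :
    (q : ℤ) ∣ ((p.choose j / p : ℕ) : ℤ) - (-1) ^ (j - 1) := by
  have : Fact q.Prime := ⟨hq⟩
  have hjq : j < q := by omega
  have hp_mod : p % q = q - 1 := by
    rw [show p = q - 1 + q * 1 by omega, Nat.add_mul_mod_self_left, Nat.mod_eq_of_lt (by omega)]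
  have hp_cast : (p : ZMod q) = -1 := by
    have h : ((p + 1 : ℕ) : ZMod q) = 0 := by
      rw [show p + 1 = 2 * q by omega, Nat.cast_mul, ZMod.natCast_self, mul_zero]
    push_cast at h
    linear_combination h
  have hchoose : (p.choose j : ZMod q) = (-1) ^ j := by
    rw [(ZMod.natCast_eq_natCast_iff _ _ _).mpr (Choose.choose_modEq_choose_mod_of_lt hjq), hp_mod,
      ZMod.sub_one_choose_eq_neg_one_pow hjq]
  have hquot : ((p.choose j / p : ℕ) : ZMod q) * p = p.choose j := by
    rw [← Nat.cast_mul, Nat.div_mul_cancel (hp.dvd_choose_self (by omega) (by omega))]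
  rw [← ZMod.intCast_zmod_eq_zero_iff_dvd]
  obtain ⟨i, rfl⟩ : ∃ i, j = i + 1 := ⟨j - 1, by omega⟩
  rw [hp_cast, hchoose] at hquot
  simp only [Int.cast_sub, Int.cast_natCast, Int.cast_pow, Int.cast_neg, Int.cast_one,
    Nat.add_sub_cancel]
  linear_combination -hquot
end

section
/- Let n be prime with (n+1)/2 also prime, and let δ ∈ {-1, 1}^{n+1} satisfy ∑_{k=0}^{n} δ_k * C(n, k) = 0. Define η_j = (-1)^j * (δ_j + δ_{n-j})/2 for 0 ≤ j ≤ (n-1)/2. Then η_0 = 0 and ∑_{j=0}^{(n-1)/2} η_j = 0; equivalently, the folded vector η has the same number of entries equal to 1 as entries equal to -1. -/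
/-!
Modulo `n` only the two end terms of `∑ δ_k C(n, k)` survive, so `n ∣ δ_0 + δ_n`, which forces
`η_0 = 0`. Folding the sum at its middle gives `∑_{j < q} (δ_j + δ_{n-j}) C(n, j) = 0` with
`q = (n + 1) / 2`; since `n ≡ -1 (mod q)`, `C(n, j) ≡ (-1)^j (mod q)` for `j < q`, so `q` divides
`∑ η_j`. As `η_0 = 0` and `|η_j| ≤ 1`, that sum has absolute value less than `q`, hence vanishes.
-/

open Finset

lemma sum_range_two_mul_eq_sum_add_reflect {M : Type*} [AddCommMonoid M] (g : ℕ → M) (q : ℕ) :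
    ∑ k ∈ range (2 * q), g k = ∑ j ∈ range q, (g j + g (2 * q - 1 - j)) := by
  rw [two_mul, sum_range_add, ← sum_range_reflect (fun j => g (q + j)), ← sum_add_distrib]
  refine sum_congr rfl fun j hj => ?_
  have : j < q := mem_range.mp hj
  rw [show q + (q - 1 - j) = q + q - 1 - j by omega]

lemma sum_mul_choose_eq_sum_fold {R : Type*} [CommSemiring R] (a : ℕ → R) {n q : ℕ}
    (h : n + 1 = 2 * q) :
    ∑ k ∈ range (n + 1), a k * n.choose k = ∑ j ∈ range q, (a j + a (n - j)) * n.choose j := by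
  rw [h, sum_range_two_mul_eq_sum_add_reflect]
  refine sum_congr rfl fun j hj => ?_
  have : j < q := mem_range.mp hj
  rw [show 2 * q - 1 - j = n - j by omega, Nat.choose_symm (by omega), add_mul]

lemma sum_mul_choose_prime_eq {R : Type*} [Semiring R] (p : ℕ) [hp : Fact p.Prime] [CharP R p]
    (a : ℕ → R) : ∑ k ∈ range (p + 1), a k * p.choose k = a 0 + a p := by
  have hp1 : p - 1 + 1 = p := Nat.sub_add_cancel hp.out.one_le
  have hmid : ∀ k ∈ range (p - 1), a (k + 1) * (p.choose (k + 1) : R) = 0 := fun k hk => by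
    have : k < p - 1 := mem_range.mp hk
    rw [(CharP.cast_eq_zero_iff R p _).mpr (hp.out.dvd_choose_self k.succ_ne_zero (by omega)),
      mul_zero]
  rw [sum_range_succ', ← hp1, sum_range_succ, hp1, sum_eq_zero hmid]
  simp [add_comm]

lemma natCast_choose_eq_neg_one_pow {p n : ℕ} [Fact p.Prime] (hn : p ∣ n + 1) {j : ℕ}
    (hj : j < p) : (n.choose j : ZMod p) = (-1) ^ j := by
  induction j with
  | zero => simp
  | succ j ih =>
    have hjn : j ≤ n := by have := Nat.le_of_dvd n.succ_pos hn; omega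
    have hn1 : (n : ZMod p) = -1 :=
      eq_neg_of_add_eq_zero_left (by exact_mod_cast (ZMod.natCast_eq_zero_iff _ _).mpr hn)
    have hj1 : (j + 1 : ZMod p) ≠ 0 := by
      exact_mod_cast (ZMod.natCast_eq_zero_iff _ _).not.mpr
        (Nat.not_dvd_of_pos_of_lt j.succ_pos hj)
    have hrec := congrArg (Nat.cast : ℕ → ZMod p) (Nat.choose_succ_right_eq n j)
    push_cast [Nat.cast_sub hjn, ih (by omega), hn1] at hrec
    refine mul_right_cancel₀ hj1 (hrec.trans ?_)
    ring

lemma sum_eq_zero_of_dvd_of_abs_le_one {q : ℕ} {x : ℕ → ℤ} (h0 : x 0 = 0)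
    (hx : ∀ j < q, |x j| ≤ 1) (hdvd : (q : ℤ) ∣ ∑ j ∈ range q, x j) : ∑ j ∈ range q, x j = 0 := by
  obtain _ | m := q
  · simp
  refine Int.eq_zero_of_abs_lt_dvd hdvd ?_
  rw [sum_range_succ', h0, add_zero]
  calc |∑ i ∈ range m, x (i + 1)| ≤ ∑ i ∈ range m, |x (i + 1)| := abs_sum_le_sum_abs _ _
    _ ≤ ∑ i ∈ range m, 1 := sum_le_sum fun i hi => hx _ (by simpa using hi)
    _ < m + 1 := by simp

lemma two_mul_add_div_two_of_sign {a b : ℤ} (ha : a = 1 ∨ a = -1) (hb : b = 1 ∨ b = -1) :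
    2 * ((a + b) / 2) = a + b := by
  rcases ha with rfl | rfl <;> rcases hb with rfl | rfl <;> norm_num

lemma abs_add_div_two_le_one_of_sign {a b : ℤ} (ha : a = 1 ∨ a = -1) (hb : b = 1 ∨ b = -1) :
    |(a + b) / 2| ≤ 1 := by
  rcases ha with rfl | rfl <;> rcases hb with rfl | rfl <;> norm_num

lemma add_div_two_eq_zero_of_sum_mul_choose_eq_zero {p : ℕ} (hp : p.Prime) (hp3 : 3 ≤ p)
    {δ : ℕ → ℤ} (h0 : δ 0 = 1 ∨ δ 0 = -1) (hp' : δ p = 1 ∨ δ p = -1)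
    (hsum : ∑ k ∈ range (p + 1), δ k * p.choose k = 0) : (δ 0 + δ p) / 2 = 0 := by
  have := Fact.mk hp
  have hdvd : (p : ℤ) ∣ 2 * ((δ 0 + δ p) / 2) := by
    rw [two_mul_add_div_two_of_sign h0 hp', ← ZMod.intCast_zmod_eq_zero_iff_dvd]
    simpa [sum_mul_choose_prime_eq] using congrArg (Int.cast : ℤ → ZMod p) hsum
  refine (mul_eq_zero.mp (Int.eq_zero_of_abs_lt_dvd hdvd ?_)).resolve_left two_ne_zero
  rw [abs_mul, abs_two]
  have := abs_add_div_two_le_one_of_sign h0 hp'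
  have : (3 : ℤ) ≤ p := by exact_mod_cast hp3
  linarith

lemma dvd_sum_neg_one_pow_mul_of_sum_mul_choose_eq_zero {q n : ℕ} [Fact q.Prime] (hn : q ∣ n + 1)
    {x : ℕ → ℤ} (h : ∑ j ∈ range q, x j * n.choose j = 0) :
    (q : ℤ) ∣ ∑ j ∈ range q, (-1) ^ j * x j := by
  rw [← ZMod.intCast_zmod_eq_zero_iff_dvd]
  have := congrArg (Int.cast : ℤ → ZMod q) h
  push_cast at this ⊢
  rw [← this]
  refine sum_congr rfl fun j hj => ?_
  rw [natCast_choose_eq_neg_one_pow hn (mem_range.mp hj), mul_comm]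

theorem folded_vector_balanced (n : ℕ) (hn : n.Prime) (hq : ((n + 1) / 2).Prime)
    (δ : ℕ → ℤ) (hδ : ∀ k ≤ n, δ k = 1 ∨ δ k = -1)
    (hsum : ∑ k ∈ Finset.range (n + 1), δ k * (n.choose k : ℤ) = 0) :
    (δ 0 + δ n) / 2 = 0 ∧
      ∑ j ∈ Finset.range ((n - 1) / 2 + 1), (-1 : ℤ) ^ j * ((δ j + δ (n - j)) / 2) = 0 := by
  set q := (n + 1) / 2
  have h2q : n + 1 = 2 * q := by
    rcases hn.eq_two_or_odd' with rfl | ⟨m, rfl⟩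
    · exact absurd hq (by decide)
    · omega
  have hq2 := hq.two_le
  have hε0 := add_div_two_eq_zero_of_sum_mul_choose_eq_zero hn (by omega) (hδ 0 (by omega))
    (hδ n le_rfl) hsum
  refine ⟨hε0, ?_⟩
  set ε : ℕ → ℤ := fun j => (δ j + δ (n - j)) / 2
  have hε2 : ∀ j ≤ n, 2 * ε j = δ j + δ (n - j) := fun j hj =>
    two_mul_add_div_two_of_sign (hδ j hj) (hδ (n - j) (Nat.sub_le n j))
  have hfold : ∑ j ∈ range q, ε j * n.choose j = 0 := by
    rw [sum_mul_choose_eq_sum_fold δ h2q] at hsum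
    rw [← mul_right_inj' (two_ne_zero (α := ℤ)), mul_zero, ← hsum, mul_sum]
    refine sum_congr rfl fun j hj => ?_
    rw [← hε2 j (by have := mem_range.mp hj; omega), mul_assoc]
  have := Fact.mk hq
  rw [show (n - 1) / 2 + 1 = q by omega]
  refine sum_eq_zero_of_dvd_of_abs_le_one (x := fun j => (-1) ^ j * ε j) (by simpa [ε] using hε0)
    (fun j hj => ?_) (dvd_sum_neg_one_pow_mul_of_sum_mul_choose_eq_zero ⟨2, by omega⟩ hfold)
  rw [abs_mul, abs_pow, abs_neg, abs_one, one_pow, one_mul]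
  exact abs_add_div_two_le_one_of_sign (hδ j (by omega)) (hδ (n - j) (Nat.sub_le n j))
end

section
/- For every natural number k ≥ 1, setting n = 6k + 2, the following identity holds: ∑_{j=0}^{2k-1} (-1)^j C(n, j) - C(n, 2k) + ∑_{j=2k+2}^{3k} (-1)^j C(n, j) = (-1)^{3k} * C(n, n/2) / 2. -/
open Finset

/-! Since `C(6k+2, 2k+1) = 2 C(6k+2, 2k)`, flipping the sign of the `j = 2k` term and dropping the
`j = 2k + 1` term leaves the alternating partial sum `∑_{j ≤ 3k} (-1)^j C(n, j)` unchanged, and that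
partial sum is `(-1)^{3k} C(n-1, 3k) = (-1)^{3k} C(n, n/2) / 2`. -/

theorem Nat.choose_three_mul_add_two_succ (j : ℕ) :
    (3 * j + 2).choose (j + 1) = 2 * (3 * j + 2).choose j := by
  have h := Nat.choose_succ_right_eq (3 * j + 2) j
  rw [show 3 * j + 2 - j = 2 * (j + 1) by omega, ← mul_assoc, mul_comm _ 2] at h
  exact Nat.eq_of_mul_eq_mul_right j.succ_pos h

theorem Nat.choose_two_mul_succ_succ (m : ℕ) :
    (2 * (m + 1)).choose (m + 1) = 2 * (2 * m + 1).choose m := by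
  rw [show 2 * (m + 1) = 2 * m + 1 + 1 by ring, Nat.choose_succ_succ', Nat.choose_symm_half]
  exact (two_mul _).symm

theorem Finset.sum_range_add_two_add_sum_Icc {M : Type*} [AddCommMonoid M] (f : ℕ → M) {a b : ℕ}
    (h : a + 1 ≤ b) :
    ∑ j ∈ range a, f j + f a + f (a + 1) + ∑ j ∈ Icc (a + 2) b, f j = ∑ j ∈ range (b + 1), f j := by
  rw [← sum_range_succ, ← sum_range_succ, ← Ico_add_one_right_eq_Icc,
    sum_range_add_sum_Ico _ (by omega)]

theorem nontrivial_bisection_six_k_two (k : ℕ) (hk : 1 ≤ k) (n : ℕ) (hn : n = 6 * k + 2) :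
    ∑ j ∈ Finset.range (2 * k), (-1 : ℤ) ^ j * (n.choose j : ℤ) - (n.choose (2 * k) : ℤ) +
        ∑ j ∈ Finset.Icc (2 * k + 2) (3 * k), (-1 : ℤ) ^ j * (n.choose j : ℤ) =
      (-1 : ℤ) ^ (3 * k) * ((n.choose (n / 2) : ℤ) / 2) := by
  subst hn
  have hsplit := sum_range_add_two_add_sum_Icc (fun j ↦ (-1 : ℤ) ^ j * ((6 * k + 2).choose j : ℤ))
    (show 2 * k + 1 ≤ 3 * k by omega)
  have hdouble : (6 * k + 2).choose (2 * k + 1) = 2 * (6 * k + 2).choose (2 * k) := by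
    simpa [show 3 * (2 * k) + 2 = 6 * k + 2 by ring] using Nat.choose_three_mul_add_two_succ (2 * k)
  have hpartial : ∑ j ∈ range (3 * k + 1), (-1 : ℤ) ^ j * ((6 * k + 2).choose j : ℤ) =
      (-1) ^ (3 * k) * ((6 * k + 1).choose (3 * k) : ℤ) :=
    Int.alternating_sum_range_choose_eq_choose
  have hcentral : (6 * k + 2).choose ((6 * k + 2) / 2) = 2 * (6 * k + 1).choose (3 * k) := by
    rw [show (6 * k + 2) / 2 = 3 * k + 1 by omega, show 6 * k + 2 = 2 * (3 * k + 1) by ring,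
      Nat.choose_two_mul_succ_succ]
    ring_nf
  rw [hcentral, Nat.cast_mul, Nat.cast_ofNat, Int.mul_ediv_cancel_left _ two_ne_zero, ← hpartial,
    ← hsplit, hdouble, pow_succ, pow_mul, neg_one_sq, one_pow]
  push_cast
  ring
end

section
/- For every natural number n and k with n ≥ 1, the identity C(n, 2k) = C(n-1, 2k+1) - C(n-1, 2k-1) holds if and only if n = 6k + 2 (for k ≥ 1 and 2k+1 ≤ n-1). -/
/-!
By Pascal's rule the identity says `C(m, i+2) = 2 C(m, i) + C(m, i+1)` with `m = n - 1`,
`i = 2k - 1`. Expressing `C(m, i+1)` and `C(m, i+2)` through `C(m, i) > 0` by the ratios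
`(m - i)/(i + 1)` and `(m - i - 1)/(i + 2)` turns this into a quadratic in `s = m - i - 1`,
which factors as `(s - (2i + 3)) (s + i + 2) = 0`; hence `m = 3i + 4`, i.e. `n = 6k + 2`.
-/

theorem mul_succ_eq_mul_iff_eq_two_mul_add_three (s i : ℕ) :
    s * (s + 1) = (i + 2) * (s + 2 * i + 3) ↔ s = 2 * i + 3 := by
  constructor
  · intro h
    have hz : (s : ℤ) * (s + 1) = (i + 2) * (s + 2 * i + 3) := by exact_mod_cast h
    have hfac : ((s : ℤ) - (2 * i + 3)) * (s + i + 2) = 0 := by linear_combination hz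
    have : (s : ℤ) = 2 * i + 3 := by
      rcases mul_eq_zero.mp hfac with h | h <;> linarith
    exact_mod_cast this
  · rintro rfl
    ring

theorem Nat.choose_add_two_eq_two_mul_add_iff {m i : ℕ} (h : i ≤ m) :
    m.choose (i + 2) = 2 * m.choose i + m.choose (i + 1) ↔ m = 3 * i + 4 := by
  rcases h.eq_or_lt with rfl | h
  · rw [Nat.choose_eq_zero_of_lt (by omega), Nat.choose_self]
    omega
  obtain ⟨s, rfl⟩ : ∃ s, m = i + 1 + s := ⟨m - (i + 1), by omega⟩
  set a := (i + 1 + s).choose i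
  set b := (i + 1 + s).choose (i + 1)
  set c := (i + 1 + s).choose (i + 2)
  have hb : b * (i + 1) = a * (s + 1) := by
    rw [Nat.choose_succ_right_eq]; congr 1; omega
  have hc : c * (i + 2) = b * s := by
    rw [Nat.choose_succ_right_eq]; congr 1; omega
  have ha : 0 < a := Nat.choose_pos (by omega)
  have hlhs : c * ((i + 1) * (i + 2)) = a * (s * (s + 1)) := by
    linear_combination (i + 1) * hc + s * hb
  have hrhs : (2 * a + b) * ((i + 1) * (i + 2)) = a * ((i + 2) * (s + 2 * i + 3)) := by
    linear_combination (i + 2) * hb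
  rw [← mul_left_inj' (by positivity : (i + 1) * (i + 2) ≠ 0), hlhs, hrhs,
    mul_right_inj' ha.ne', mul_succ_eq_mul_iff_eq_two_mul_add_three]
  omega

theorem choose_identity_iff_six_k_two_general (n k : ℕ) (hk : 1 ≤ k)
    (hkn : 2 * k + 1 ≤ n - 1) :
    (n.choose (2 * k) : ℤ) = ((n - 1).choose (2 * k + 1) : ℤ) - ((n - 1).choose (2 * k - 1) : ℤ)
      ↔ n = 6 * k + 2 := by
  obtain ⟨m, rfl⟩ : ∃ m, n = m + 1 := ⟨n - 1, by omega⟩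
  obtain ⟨i, hi⟩ : ∃ i, 2 * k = i + 1 := ⟨2 * k - 1, by omega⟩
  have hpascal := Nat.choose_succ_succ' m i
  have hkey := Nat.choose_add_two_eq_two_mul_add_iff (m := m) (i := i) (by omega)
  rw [Nat.add_sub_cancel, hi, show i + 1 + 1 = i + 2 by rfl, Nat.add_sub_cancel, hpascal]
  omega

theorem choose_identity_iff_six_k_two (n k : ℕ) (hn : 1 ≤ n) (hk : 1 ≤ k)
    (hkn : 2 * k + 1 ≤ n - 1) :
    (n.choose (2 * k) : ℤ) = ((n - 1).choose (2 * k + 1) : ℤ) - ((n - 1).choose (2 * k - 1) : ℤ)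
      ↔ n = 6 * k + 2 :=
  choose_identity_iff_six_k_two_general n k hk hkn
end

section
/- For every integer k ≥ 2, setting n = 4k² - 3 and s = 2k² - k, the identity C(n, s-3) - C(n, s-2) - C(n, s-1) + C(n, s) = 0 holds. -/
/-!
Since `C(n, j + 1) (j + 1) = C(n, j) (n - j)`, each of the four coefficients is `C(n, s - 3)` times
a rational function of `n` and `s`, and clearing denominators gives
`(s - 2)(s - 1)s · (four-term sum) = (n + 1)((n - 2s + 3)² - (n + 3)) · C(n, s - 3)`.
So the sum vanishes as soon as `n + 3 = t²` and `n - 2s + 3 = ±t`; here `t = 2k`.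
-/

theorem Nat.choose_succ_right_mul_int (n k : ℕ) :
    (n.choose (k + 1) : ℤ) * (k + 1) = n.choose k * (n - k) := by
  rcases le_or_gt k n with hkn | hnk
  · rw [← Nat.cast_sub hkn]
    exact_mod_cast Nat.choose_succ_right_eq n k
  · simp [Nat.choose_eq_zero_of_lt hnk, Nat.choose_eq_zero_of_lt (Nat.lt_succ_of_lt hnk)]

theorem Nat.choose_four_term_mul (n m : ℕ) :
    ((m : ℤ) + 1) * (m + 2) * (m + 3) *
        ((n.choose m : ℤ) - n.choose (m + 1) - n.choose (m + 2) + n.choose (m + 3)) =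
      ((n : ℤ) + 1) * (((n : ℤ) - 2 * m - 3) ^ 2 - (n + 3)) * n.choose m := by
  have E1 := Nat.choose_succ_right_mul_int n m
  have E2 : (n.choose (m + 2) : ℤ) * (m + 2) = n.choose (m + 1) * (n - (m + 1)) := by
    exact_mod_cast Nat.choose_succ_right_mul_int n (m + 1)
  have E3 : (n.choose (m + 3) : ℤ) * (m + 3) = n.choose (m + 2) * (n - (m + 2)) := by
    exact_mod_cast Nat.choose_succ_right_mul_int n (m + 2)
  linear_combination (((n : ℤ) - 2 * m - 5) * (n - m - 1) - (m + 2) * (m + 3)) * E1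
    + ((m + 1) * ((n : ℤ) - 2 * m - 5)) * E2 + ((m + 1) * ((m : ℤ) + 2)) * E3

theorem Nat.choose_four_term_eq_zero_of_sq_eq (n m : ℕ)
    (h : ((n : ℤ) - 2 * m - 3) ^ 2 = n + 3) :
    (n.choose m : ℤ) - n.choose (m + 1) - n.choose (m + 2) + n.choose (m + 3) = 0 := by
  have hmul := Nat.choose_four_term_mul n m
  rw [h, sub_self, mul_zero, zero_mul] at hmul
  exact eq_zero_of_ne_zero_of_mul_left_eq_zero (by positivity) hmul

theorem choose_four_term_vanishing (k : ℕ) (hk : 2 ≤ k) (n s : ℕ)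
    (hn : n = 4 * k ^ 2 - 3) (hs : s = 2 * k ^ 2 - k) :
    (n.choose (s - 3) : ℤ) - (n.choose (s - 2) : ℤ) - (n.choose (s - 1) : ℤ)
      + (n.choose s : ℤ) = 0 := by
  have hk_sq : 2 * k ≤ k ^ 2 := by nlinarith
  generalize hq : k ^ 2 = q at hn hs hk_sq
  obtain ⟨m, rfl⟩ : ∃ m, s = m + 3 := ⟨s - 3, by omega⟩
  have hsq : ((n : ℤ) - 2 * m - 3) ^ 2 = n + 3 := by
    have hnZ : (n : ℤ) = 4 * q - 3 := by omega
    have hmZ : (m : ℤ) = 2 * q - k - 3 := by omega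
    rw [hnZ, hmZ, ← hq]
    push_cast
    ring
  rw [Nat.add_sub_cancel, show m + 3 - 2 = m + 1 by omega, show m + 3 - 1 = m + 2 by omega]
  exact Nat.choose_four_term_eq_zero_of_sq_eq n m hsq
end
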